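/- Iterating the NAND noise-growth bound: if all fresh ciphertexts in DualHE have error matrices with ‖E‖_∞ ≤ β_init, then every ciphertext occurring after homomorphically evaluating a Boolean circuit of NAND-depth L can be written as A'S + E + μG with ‖E‖_∞ ≤ β_init·(N+1)^L. -/

import Mathlib

/-!
The centred absolute value `zqabs` is subadditive, because the centred lift of a residue is its
shortest integer lift. Hence multiplying the noise `E₀` by the `0/1` matrix `G⁻¹(C₁)` multiplies
its entrywise bound by at most `N`, and one NAND `G - C₀ G⁻¹(C₁)` has noise
`-(E₀ G⁻¹(C₁) + μ₀ E₁)`, bounded by `(N + 1) β`. Induction on the depth gives `β_init (N + 1)^L`.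
-/

open Matrix

/-- The representative of `x : ZMod q` in `(−q/2, q/2]`. -/
def zrep (q : ℕ) [NeZero q] (x : ZMod q) : ℤ :=
  if 2 * (x.val : ℤ) ≤ (q : ℤ) then (x.val : ℤ) else (x.val : ℤ) - q

/-- The absolute value `|x|` of the representative of `x : ZMod q` in `(−q/2, q/2]`. -/
def zqabs (q : ℕ) [NeZero q] (x : ZMod q) : ℤ := |zrep q x|

/-- The set of DualHE ciphertexts obtainable at NAND-depth `L`: fresh ciphertexts
`A'S + E + μG` with `‖E‖_∞ ≤ β_init` at depth `0`, closed under the homomorphic NAND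
`(C₀, C₁) ↦ G − C₀ · G⁻¹(C₁)` at each further level. -/
def dualHECtxts (q n m N : ℕ) [NeZero q]
    (A' : Matrix (Fin (m + 1)) (Fin n) (ZMod q))
    (G : Matrix (Fin (m + 1)) (Fin N) (ZMod q))
    (Ginv : Matrix (Fin (m + 1)) (Fin N) (ZMod q) → Matrix (Fin N) (Fin N) (ZMod q))
    (βinit : ℝ) : ℕ → Set (Matrix (Fin (m + 1)) (Fin N) (ZMod q))
  | 0 => {C | ∃ S E μ, (μ = 0 ∨ μ = 1) ∧ C = A' * S + E + μ • G ∧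
      ∀ i j, (zqabs q (E i j) : ℝ) ≤ βinit}
  | (L + 1) => dualHECtxts q n m N A' G Ginv βinit L ∪
      {C | ∃ C0 ∈ dualHECtxts q n m N A' G Ginv βinit L,
        ∃ C1 ∈ dualHECtxts q n m N A' G Ginv βinit L, C = G - C0 * Ginv C1}

section CenteredAbs

variable {q : ℕ} [NeZero q]

lemma intCast_zrep (x : ZMod q) : ((zrep q x : ℤ) : ZMod q) = x := by
  unfold zrep
  split <;> simp [ZMod.natCast_val, ZMod.cast_id]

lemma two_mul_abs_zrep_le (x : ZMod q) : 2 * |zrep q x| ≤ q := by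
  have hlt : (x.val : ℤ) < q := by exact_mod_cast ZMod.val_lt x
  unfold zrep
  split
  · rw [abs_of_nonneg (by positivity)]; omega
  · rw [abs_of_nonpos (by omega)]; omega

lemma zqabs_nonneg (x : ZMod q) : 0 ≤ zqabs q x := abs_nonneg _

@[simp]
lemma zqabs_zero : zqabs q 0 = 0 := by simp [zqabs, zrep]

/-- Two lifts of `x` differ by a multiple of `q`; a nonzero one has size at least
`q ≥ 2 |zrep q x|`, so the centred lift is the shortest. -/
lemma zqabs_le_abs_of_intCast_eq {z : ℤ} {x : ZMod q} (h : (z : ZMod q) = x) :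
    zqabs q x ≤ |z| := by
  rcases eq_or_ne z (zrep q x) with rfl | hne
  · exact le_rfl
  have hdvd : (q : ℤ) ∣ z - zrep q x :=
    (ZMod.intCast_zmod_eq_zero_iff_dvd _ q).1 (by push_cast [intCast_zrep, h]; ring)
  have hq : (q : ℤ) ≤ |z - zrep q x| :=
    Int.le_of_dvd (abs_pos.2 (sub_ne_zero.2 hne)) ((dvd_abs _ _).2 hdvd)
  have := two_mul_abs_zrep_le x
  have := abs_sub z (zrep q x)
  unfold zqabs
  omega

lemma zqabs_add_le (x y : ZMod q) : zqabs q (x + y) ≤ zqabs q x + zqabs q y :=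
  (zqabs_le_abs_of_intCast_eq (by push_cast [intCast_zrep]; rfl)).trans (abs_add_le _ _)

lemma zqabs_neg_le (x : ZMod q) : zqabs q (-x) ≤ zqabs q x :=
  (zqabs_le_abs_of_intCast_eq (by push_cast [intCast_zrep]; rfl)).trans (abs_neg _).le

lemma zqabs_sum_le {ι : Type*} (s : Finset ι) (f : ι → ZMod q) :
    zqabs q (∑ i ∈ s, f i) ≤ ∑ i ∈ s, zqabs q (f i) :=
  Finset.le_sum_of_subadditive _ zqabs_zero.le zqabs_add_le s f

lemma zqabs_mul_le_of_eq_zero_or_eq_one (x : ZMod q) {b : ZMod q} (hb : b = 0 ∨ b = 1) :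
    zqabs q (x * b) ≤ zqabs q x := by
  rcases hb with rfl | rfl
  · simpa using zqabs_nonneg x
  · simp

lemma zqabs_mul_apply_le {α ι γ : Type*} [Fintype ι] {E : Matrix α ι (ZMod q)}
    {B : Matrix ι γ (ZMod q)} {β : ℝ} {i : α} {j : γ}
    (hE : ∀ k, (zqabs q (E i k) : ℝ) ≤ β) (hB : ∀ k, B k j = 0 ∨ B k j = 1) :
    (zqabs q ((E * B) i j) : ℝ) ≤ Fintype.card ι * β :=
  calc (zqabs q ((E * B) i j) : ℝ) ≤ ∑ k, (zqabs q (E i k * B k j) : ℝ) := by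
        rw [Matrix.mul_apply]; exact_mod_cast zqabs_sum_le _ _
    _ ≤ ∑ _k : ι, β := Finset.sum_le_sum fun k _ =>
        (Int.cast_le.2 (zqabs_mul_le_of_eq_zero_or_eq_one _ (hB k))).trans (hE k)
    _ = Fintype.card ι * β := by simp

end CenteredAbs

section NoisyEncoding

variable {q n m N : ℕ} [NeZero q] {A' : Matrix (Fin (m + 1)) (Fin n) (ZMod q)}
  {G : Matrix (Fin (m + 1)) (Fin N) (ZMod q)}

def IsNoisyEncoding (A' : Matrix (Fin (m + 1)) (Fin n) (ZMod q))
    (G : Matrix (Fin (m + 1)) (Fin N) (ZMod q)) (β : ℝ)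
    (C : Matrix (Fin (m + 1)) (Fin N) (ZMod q)) : Prop :=
  ∃ (S : Matrix (Fin n) (Fin N) (ZMod q)) (E : Matrix (Fin (m + 1)) (Fin N) (ZMod q)) (μ : ℕ),
    (μ = 0 ∨ μ = 1) ∧ C = A' * S + E + μ • G ∧ ∀ i j, (zqabs q (E i j) : ℝ) ≤ β

lemma IsNoisyEncoding.mono {β β' : ℝ} {C : Matrix (Fin (m + 1)) (Fin N) (ZMod q)}
    (h : IsNoisyEncoding A' G β C) (hβ : β ≤ β') : IsNoisyEncoding A' G β' C := by
  obtain ⟨S, E, μ, hμ, hC, hE⟩ := h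
  exact ⟨S, E, μ, hμ, hC, fun i j => (hE i j).trans hβ⟩

/-- Since `G B = C₁`, the term `μ₀ G B` of `C₀ B` re-expands as `μ₀ C₁`, so `G - C₀ B` encodes
`1 - μ₀ μ₁` with noise `-(E₀ B + μ₀ E₁)`. -/
lemma IsNoisyEncoding.nand {β : ℝ} {C₀ C₁ : Matrix (Fin (m + 1)) (Fin N) (ZMod q)}
    {B : Matrix (Fin N) (Fin N) (ZMod q)} (hGB : G * B = C₁)
    (hB : ∀ i j, B i j = 0 ∨ B i j = 1)
    (h₀ : IsNoisyEncoding A' G β C₀) (h₁ : IsNoisyEncoding A' G β C₁) :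
    IsNoisyEncoding A' G (β * (N + 1)) (G - C₀ * B) := by
  obtain ⟨S₀, E₀, μ₀, hμ₀, rfl, hE₀⟩ := h₀
  obtain ⟨S₁, E₁, μ₁, hμ₁, rfl, hE₁⟩ := h₁
  refine ⟨-(S₀ * B + μ₀ • S₁), -(E₀ * B + μ₀ • E₁), 1 - μ₀ * μ₁, ?_, ?_, fun i j => ?_⟩
  · rcases hμ₀ with rfl | rfl <;> rcases hμ₁ with rfl | rfl <;> simp
  · rw [Matrix.add_mul, Matrix.add_mul, Matrix.smul_mul, hGB, Matrix.mul_assoc]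
    rcases hμ₀ with rfl | rfl <;> rcases hμ₁ with rfl | rfl <;>
      simp only [Matrix.mul_add, Matrix.mul_neg, Matrix.mul_smul] <;> module
  · have hβ : 0 ≤ β := (Int.cast_nonneg (zqabs_nonneg _)).trans (hE₁ i j)
    have hprod : (zqabs q ((E₀ * B) i j) : ℝ) ≤ N * β := by
      simpa using zqabs_mul_apply_le (hE₀ i) (fun k => hB k j)
    have hsmul : (zqabs q ((μ₀ • E₁) i j) : ℝ) ≤ β := by
      rcases hμ₀ with rfl | rfl
      · simpa using hβ
      · simpa using hE₁ i j
    have hsum : (zqabs q ((-(E₀ * B + μ₀ • E₁)) i j) : ℝ)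
        ≤ zqabs q ((E₀ * B) i j) + zqabs q ((μ₀ • E₁) i j) := by
      exact_mod_cast (zqabs_neg_le _).trans (zqabs_add_le _ _)
    linarith

end NoisyEncoding

/-- Iterated noise growth in DualHE: every ciphertext arising from a depth-`L` NAND
circuit applied to fresh ciphertexts (noise bound `β_init`) has the form `A'S + E + μG`
with `μ ∈ {0,1}` and `‖E‖_∞ ≤ β_init (N+1)^L`. -/
theorem dualHE_depth_noise_bound (q n m N : ℕ) [NeZero q]
    (A' : Matrix (Fin (m + 1)) (Fin n) (ZMod q))
    (G : Matrix (Fin (m + 1)) (Fin N) (ZMod q))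
    (Ginv : Matrix (Fin (m + 1)) (Fin N) (ZMod q) → Matrix (Fin N) (Fin N) (ZMod q))
    (hGinv : ∀ C, G * Ginv C = C)
    (hbin : ∀ C i j, Ginv C i j = 0 ∨ Ginv C i j = 1)
    (βinit : ℝ) (hβ : 0 ≤ βinit) (L : ℕ)
    (C : Matrix (Fin (m + 1)) (Fin N) (ZMod q))
    (hC : C ∈ dualHECtxts q n m N A' G Ginv βinit L) :
    ∃ S E μ, (μ = 0 ∨ μ = 1) ∧ C = A' * S + E + μ • G ∧
      ∀ i j, (zqabs q (E i j) : ℝ) ≤ βinit * (N + 1) ^ L := by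
  suffices IsNoisyEncoding A' G (βinit * (N + 1) ^ L) C from this
  induction L generalizing C with
  | zero => rwa [pow_zero, mul_one]
  | succ L ih =>
    have hgrow : βinit * (N + 1) ^ L ≤ βinit * (N + 1) ^ (L + 1) := by
      gcongr <;> bound
    rcases hC with hC | ⟨C₀, hC₀, C₁, hC₁, rfl⟩
    · exact (ih C hC).mono hgrow
    · rw [pow_succ, ← mul_assoc]
      exact (ih C₀ hC₀).nand (hGinv C₁) (hbin C₁) (ih C₁ hC₁)
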